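/- Let (W_t) be a symmetric lazy random walk on ℤ (increments in {−1,0,1}, mean zero, symmetric). For constants c₁, c₂ > 0 set t = ⌊c₁ λ² log λ⌋ and suppose i, j ∈ ℤ with |i − j| > c₂ λ log λ. Let W(i,[0,t]) denote the range up to time t of an independent copy started at i, and let Ā denote the 3-neighborhood of a set A. Then for λ large enough, P[ W̄(i,[0,t]) ∩ W̄(j,[0,t]) ≠ ∅ ] ≤ C λ^{−α} with α = c₂²/(18 c₁). -/

import Mathlib

/-!
Two walks that come within distance `6` of each other before time `t` force one of them to move
at least `u = c₂ λ log λ / 3` away from its start, because `|i - j| > 3u ≥ 2u + 6`. For a single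
walk this has probability at most `2 exp (-u² / (2t)) ≤ 2 λ^{-α}` by a maximal Hoeffding
inequality: for `θ ≥ 0` the process `exp (θ S_n)` is a submartingale, so Doob's maximal inequality
bounds `P(max_{s ≤ n} S_s ≥ u)` by `exp (-θu) E exp (θ S_n) ≤ exp (-θu + nθ²/2)`, and `θ = u / n`
gives `exp (-u² / (2n))`.
-/

open MeasureTheory ProbabilityTheory Finset Real
open scoped NNReal ENNReal

namespace ProbabilityTheory

variable {Ω : Type*} {mΩ : MeasurableSpace Ω} {μ : Measure Ω}

lemma one_le_mgf_of_integral_eq_zero [IsProbabilityMeasure μ] {X : Ω → ℝ} {t : ℝ}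
    (hX : Integrable X μ) (hexp : Integrable (fun ω ↦ exp (t * X ω)) μ) (hmean : μ[X] = 0) :
    1 ≤ mgf X μ t := by
  have h : ∫ ω, (1 + t * X ω) ∂μ ≤ mgf X μ t :=
    integral_mono ((integrable_const 1).add (hX.const_mul t)) hexp
      fun ω ↦ by simpa [add_comm] using add_one_le_exp (t * X ω)
  rwa [integral_add (integrable_const _) (hX.const_mul t), integral_const_mul, hmean,
    integral_const, probReal_univ, one_smul, mul_zero, add_zero] at h

lemma integral_eq_zero_of_identDistrib_neg {X : Ω → ℝ}
    (hX : IdentDistrib X (fun ω ↦ -X ω) μ μ) : μ[X] = 0 := by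
  have h := hX.integral_eq
  rw [integral_neg] at h
  linarith

def partialSum (ξ : ℕ → Ω → ℝ) (n : ℕ) (ω : Ω) : ℝ := ∑ r ∈ range n, ξ r ω

section PartialSum

variable {ξ : ℕ → Ω → ℝ}

lemma partialSum_succ (n : ℕ) : partialSum ξ (n + 1) = partialSum ξ n + ξ n := by
  funext ω; exact sum_range_succ _ _

lemma measurable_partialSum_iSup_lt {k n : ℕ} (hkn : k ≤ n) :
    Measurable[⨆ j ∈ Set.Iio n, MeasurableSpace.comap (ξ j) inferInstance] (partialSum ξ k) :=
  Finset.measurable_sum _ fun r hr ↦ (comap_measurable (ξ r)).mono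
    (le_biSup (fun j ↦ MeasurableSpace.comap (ξ j) _)
      (lt_of_lt_of_le (mem_range.1 hr) hkn)) le_rfl

/-- At time `n` this is `σ(ξ 0, …, ξ (n - 1))`. -/
def partialSumFiltration (hξ : ∀ n, Measurable (ξ n)) : Filtration ℕ mΩ :=
  Filtration.natural (partialSum ξ) fun _ ↦
    (Finset.measurable_sum _ fun r _ ↦ hξ r).stronglyMeasurable

lemma indep_comap_partialSumFiltration (hξ : ∀ n, Measurable (ξ n)) (hind : iIndepFun ξ μ) (n : ℕ) :
    Indep (MeasurableSpace.comap (ξ n) inferInstance) (partialSumFiltration hξ n) μ := by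
  have h := indep_iSup_of_disjoint (fun j ↦ (hξ j).comap_le) hind
    (S := {n}) (T := Set.Iio n) (by simp)
  rw [_root_.iSup_singleton] at h
  refine indep_of_indep_of_le_right h (iSup₂_le fun k hk ↦ ?_)
  exact (measurable_partialSum_iSup_lt hk).comap_le

lemma indepFun_partialSum (hξ : ∀ n, Measurable (ξ n)) (hind : iIndepFun ξ μ) (n : ℕ) :
    IndepFun (partialSum ξ n) (ξ n) μ := by
  convert hind.indepFun_finsetSum_of_notMem hξ notMem_range_self using 1
  funext ω
  simp [partialSum]

lemma indepFun_exp_mul_partialSum (hξ : ∀ n, Measurable (ξ n)) (hind : iIndepFun ξ μ)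
    (θ : ℝ) (n : ℕ) :
    IndepFun (fun ω ↦ exp (θ * partialSum ξ n ω)) (fun ω ↦ exp (θ * ξ n ω)) μ :=
  (indepFun_partialSum hξ hind n).comp (measurable_exp.comp (measurable_const_mul θ))
    (measurable_exp.comp (measurable_const_mul θ))

lemma exp_mul_partialSum_succ (θ : ℝ) (n : ℕ) :
    (fun ω ↦ exp (θ * partialSum ξ (n + 1) ω)) =
      (fun ω ↦ exp (θ * partialSum ξ n ω)) * fun ω ↦ exp (θ * ξ n ω) := by
  funext ω
  simp [partialSum_succ, mul_add, exp_add]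

lemma integrable_exp_mul_partialSum (hξ : ∀ n, Measurable (ξ n)) (hind : iIndepFun ξ μ)
    [IsProbabilityMeasure μ] {θ : ℝ} (hexp : ∀ n, Integrable (fun ω ↦ exp (θ * ξ n ω)) μ)
    (n : ℕ) : Integrable (fun ω ↦ exp (θ * partialSum ξ n ω)) μ := by
  induction n with
  | zero => simp [partialSum]
  | succ n ih =>
    rw [exp_mul_partialSum_succ]
    exact (indepFun_exp_mul_partialSum hξ hind θ n).integrable_mul ih (hexp n)

lemma submartingale_exp_mul_partialSum [IsProbabilityMeasure μ] (hξ : ∀ n, Measurable (ξ n))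
    (hind : iIndepFun ξ μ) (hint : ∀ n, Integrable (ξ n) μ) (hmean : ∀ n, μ[ξ n] = 0) {θ : ℝ}
    (hexp : ∀ n, Integrable (fun ω ↦ exp (θ * ξ n ω)) μ) :
    Submartingale (fun n ω ↦ exp (θ * partialSum ξ n ω)) (partialSumFiltration hξ) μ := by
  have hadapted : StronglyAdapted (partialSumFiltration hξ)
      (fun n ω ↦ exp (θ * partialSum ξ n ω)) := fun n ↦
    (continuous_exp.comp (continuous_const_mul θ)).comp_stronglyMeasurable
      (Filtration.stronglyAdapted_natural _ n)
  refine submartingale_nat hadapted (integrable_exp_mul_partialSum hξ hind hexp) fun n ↦ ?_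
  have hcond : μ[fun ω ↦ exp (θ * ξ n ω) | partialSumFiltration hξ n] =ᵐ[μ]
      fun _ ↦ mgf (ξ n) μ θ :=
    condExp_indep_eq (hξ n).comap_le ((partialSumFiltration hξ).le n)
      ((measurable_exp.comp ((comap_measurable (ξ n)).const_mul θ)).stronglyMeasurable)
      (indep_comap_partialSumFiltration hξ hind n)
  have hpull : μ[fun ω ↦ exp (θ * partialSum ξ (n + 1) ω) | partialSumFiltration hξ n] =ᵐ[μ]
      (fun ω ↦ exp (θ * partialSum ξ n ω)) *
        μ[fun ω ↦ exp (θ * ξ n ω) | partialSumFiltration hξ n] := by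
    rw [exp_mul_partialSum_succ]
    refine condExp_mul_of_stronglyMeasurable_left (hadapted n) ?_ (hexp n)
    rw [← exp_mul_partialSum_succ]
    exact integrable_exp_mul_partialSum hξ hind hexp (n + 1)
  filter_upwards [hpull, hcond] with ω hpull hcond
  rw [hpull, Pi.mul_apply, hcond]
  exact le_mul_of_one_le_right (exp_pos _).le
    (one_le_mgf_of_integral_eq_zero (hint n) (hexp n) (hmean n))

lemma measure_exists_partialSum_ge_le_mgf [IsProbabilityMeasure μ] (hξ : ∀ n, Measurable (ξ n))
    (hind : iIndepFun ξ μ) (hint : ∀ n, Integrable (ξ n) μ) (hmean : ∀ n, μ[ξ n] = 0) {θ : ℝ}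
    (hθ : 0 ≤ θ) (hexp : ∀ n, Integrable (fun ω ↦ exp (θ * ξ n ω)) μ) (u : ℝ) (n : ℕ) :
    μ {ω | ∃ s ≤ n, u ≤ partialSum ξ s ω} ≤
      ENNReal.ofReal (exp (-(θ * u)) * mgf (partialSum ξ n) μ θ) := by
  set ε : ℝ≥0 := (exp (θ * u)).toNNReal
  have hε : (ε : ℝ) = exp (θ * u) := coe_toNNReal _ (exp_pos _).le
  set A := {ω | (ε : ℝ) ≤ (range (n + 1)).sup' nonempty_range_add_one
    fun k ↦ exp (θ * partialSum ξ k ω)}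
  have hsubset : {ω | ∃ s ≤ n, u ≤ partialSum ξ s ω} ⊆ A := by
    rintro ω ⟨s, hs, hus⟩
    show (ε : ℝ) ≤ _
    rw [hε]
    exact (exp_le_exp.2 (mul_le_mul_of_nonneg_left hus hθ)).trans
      (le_sup' (fun k ↦ exp (θ * partialSum ξ k ω)) (mem_range_succ_iff.2 hs))
  have hdoob : (ε : ℝ≥0∞) * μ A ≤ ENNReal.ofReal (mgf (partialSum ξ n) μ θ) :=
    (maximal_ineq (submartingale_exp_mul_partialSum hξ hind hint hmean hexp)
      (fun _ _ ↦ (exp_pos _).le) n).trans <| ENNReal.ofReal_le_ofReal <|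
        setIntegral_le_integral (integrable_exp_mul_partialSum hξ hind hexp n)
          (ae_of_all _ fun _ ↦ (exp_pos _).le)
  have hε0 : (ε : ℝ≥0∞) ≠ 0 := by simp [ε, exp_pos]
  calc μ {ω | ∃ s ≤ n, u ≤ partialSum ξ s ω} ≤ μ A := measure_mono hsubset
    _ = (ε : ℝ≥0∞)⁻¹ * (ε * μ A) := by
      rw [← mul_assoc, ENNReal.inv_mul_cancel hε0 ENNReal.coe_ne_top, one_mul]
    _ ≤ (ε : ℝ≥0∞)⁻¹ * ENNReal.ofReal (mgf (partialSum ξ n) μ θ) := by gcongr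
    _ = ENNReal.ofReal (exp (-(θ * u)) * mgf (partialSum ξ n) μ θ) := by
      rw [ENNReal.ofReal_mul (exp_pos _).le, exp_neg,
        ENNReal.ofReal_inv_of_pos (exp_pos _)]
      rfl

lemma measure_exists_partialSum_ge_le [IsProbabilityMeasure μ] (hξ : ∀ n, Measurable (ξ n))
    (hind : iIndepFun ξ μ) {c : ℝ≥0} (hsub : ∀ n, HasSubgaussianMGF (ξ n) c μ)
    (hmean : ∀ n, μ[ξ n] = 0) {u : ℝ} (hu : 0 ≤ u) (n : ℕ) :
    μ {ω | ∃ s ≤ n, u ≤ partialSum ξ s ω} ≤ ENNReal.ofReal (exp (-u ^ 2 / (2 * n * c))) := by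
  rcases eq_or_ne ((n : ℝ) * c) 0 with hnc | hnc
  · rw [mul_assoc, hnc, mul_zero, div_zero, exp_zero, ENNReal.ofReal_one]
    exact prob_le_one
  have hnc_pos : 0 < (n : ℝ) * c := lt_of_le_of_ne (by positivity) hnc.symm
  set θ := u / (n * c)
  have hmgf : mgf (partialSum ξ n) μ θ ≤ exp (n * c * θ ^ 2 / 2) := by
    have h := (HasSubgaussianMGF.sum_of_iIndepFun hind (s := range n)
      fun k _ ↦ hsub k).mgf_le θ
    simp only [sum_const, card_range, nsmul_eq_mul, NNReal.coe_mul, NNReal.coe_natCast] at h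
    exact h
  refine (measure_exists_partialSum_ge_le_mgf hξ hind (fun k ↦ (hsub k).integrable) hmean
    (by positivity) (fun k ↦ (hsub k).integrable_exp_mul θ) u n).trans
    (ENNReal.ofReal_le_ofReal ?_)
  calc exp (-(θ * u)) * mgf (partialSum ξ n) μ θ
      ≤ exp (-(θ * u)) * exp (n * c * θ ^ 2 / 2) := by gcongr
    _ = exp (-u ^ 2 / (2 * n * c)) := by
      rw [← exp_add]
      congr 1
      simp only [θ]
      field_simp
      ring

lemma measure_exists_abs_partialSum_ge_le [IsProbabilityMeasure μ]
    (hξ : ∀ n, Measurable (ξ n)) (hind : iIndepFun ξ μ) {c : ℝ≥0}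
    (hsub : ∀ n, HasSubgaussianMGF (ξ n) c μ) (hmean : ∀ n, μ[ξ n] = 0) {u : ℝ} (hu : 0 ≤ u)
    (n : ℕ) :
    μ {ω | ∃ s ≤ n, u ≤ |partialSum ξ s ω|} ≤
      ENNReal.ofReal (2 * exp (-u ^ 2 / (2 * n * c))) := by
  have hneg : ∀ s ω, partialSum (fun k ω ↦ -ξ k ω) s ω = -partialSum ξ s ω := fun s ω ↦ by
    simp [partialSum]
  have hupper := measure_exists_partialSum_ge_le hξ hind hsub hmean hu n
  have hlower := measure_exists_partialSum_ge_le (ξ := fun k ω ↦ -ξ k ω) (fun k ↦ (hξ k).neg)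
    (hind.comp (fun _ ↦ Neg.neg) fun _ ↦ measurable_neg) (fun k ↦ (hsub k).neg)
    (fun k ↦ by rw [integral_neg, hmean k, neg_zero]) hu n
  simp only [hneg] at hlower
  have hsubset : {ω | ∃ s ≤ n, u ≤ |partialSum ξ s ω|} ⊆
      {ω | ∃ s ≤ n, u ≤ partialSum ξ s ω} ∪ {ω | ∃ s ≤ n, u ≤ -partialSum ξ s ω} := by
    rintro ω ⟨s, hs, hus⟩
    rcases le_abs'.1 hus with h | h
    · exact Or.inr ⟨s, hs, by linarith⟩
    · exact Or.inl ⟨s, hs, h⟩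
  calc _ ≤ _ := measure_mono hsubset
    _ ≤ _ := measure_union_le _ _
    _ ≤ _ := add_le_add hupper hlower
    _ = _ := by rw [← ENNReal.ofReal_add (exp_pos _).le (exp_pos _).le, ← two_mul]

end PartialSum

lemma hasSubgaussianMGF_one_of_abs_le_one [IsProbabilityMeasure μ] {X : Ω → ℝ}
    (hX : AEMeasurable X μ) (hb : ∀ᵐ ω ∂μ, |X ω| ≤ 1) (hmean : μ[X] = 0) :
    HasSubgaussianMGF X 1 μ := by
  have h := hasSubgaussianMGF_of_mem_Icc_of_integral_eq_zero hX
    (hb.mono fun ω hω ↦ abs_le.1 hω) hmean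
  convert h
  ext
  norm_num

structure IsLazySymmetricWalkIncrements (X : ℕ → Ω → ℤ) (μ : Measure Ω) : Prop where
  measurable : ∀ n, Measurable (X n)
  iIndepFun : iIndepFun X μ
  mem : ∀ n, ∀ᵐ ω ∂μ, X n ω ∈ ({-1, 0, 1} : Set ℤ)
  symm : ∀ n, IdentDistrib (X n) (fun ω ↦ -X n ω) μ μ

lemma IsLazySymmetricWalkIncrements.measure_exists_abs_sum_ge_le [IsProbabilityMeasure μ]
    {X : ℕ → Ω → ℤ} (hX : IsLazySymmetricWalkIncrements X μ) {u : ℝ} (hu : 0 ≤ u) (n : ℕ) :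
    μ {ω | ∃ s ≤ n, u ≤ |∑ r ∈ range s, (X r ω : ℝ)|} ≤
      ENNReal.ofReal (2 * exp (-u ^ 2 / (2 * n))) := by
  have hcast : Measurable (fun z : ℤ ↦ (z : ℝ)) := measurable_from_top
  have hmean : ∀ n, μ[fun ω ↦ (X n ω : ℝ)] = 0 := fun n ↦ by
    have h := (hX.symm n).comp hcast
    simp only [Function.comp_def, Int.cast_neg] at h
    exact integral_eq_zero_of_identDistrib_neg h
  have hbound : ∀ n, ∀ᵐ ω ∂μ, |(X n ω : ℝ)| ≤ 1 := fun n ↦ (hX.mem n).mono fun ω hω ↦ by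
    simp only [Set.mem_insert_iff, Set.mem_singleton_iff] at hω
    rcases hω with h | h | h <;> simp [h]
  have h := measure_exists_abs_partialSum_ge_le (fun k ↦ hcast.comp (hX.measurable k))
    (hX.iIndepFun.comp (fun _ z ↦ (z : ℝ)) fun _ ↦ hcast)
    (fun k ↦ hasSubgaussianMGF_one_of_abs_le_one (hcast.comp (hX.measurable k)).aemeasurable
      (hbound k) (hmean k)) hmean hu n
  simp only [NNReal.coe_one, mul_one] at h
  exact h

end ProbabilityTheory

lemma le_abs_or_le_abs_of_abs_sub_le {i j x y r u : ℝ} (hij : 2 * u + r ≤ |i - j|)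
    (h : |(i + x) - (j + y)| ≤ r) : u ≤ |x| ∨ u ≤ |y| := by
  by_contra! hxy
  have htri := abs_add_le ((i + x) - (j + y)) (y - x)
  rw [show (i + x) - (j + y) + (y - x) = i - j by ring] at htri
  linarith [abs_sub y x]

lemma setOf_exists_abs_sub_le_subset_union {Ω : Type*} {X Y : ℕ → Ω → ℤ} {i j r : ℤ} {u : ℝ}
    (hij : 2 * u + r ≤ |(i : ℝ) - j|) (t : ℕ) :
    {ω | ∃ s ≤ t, ∃ s' ≤ t, |(i + ∑ k ∈ range s, X k ω) - (j + ∑ k ∈ range s', Y k ω)| ≤ r} ⊆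
      {ω | ∃ s ≤ t, u ≤ |∑ k ∈ range s, (X k ω : ℝ)|} ∪
        {ω | ∃ s ≤ t, u ≤ |∑ k ∈ range s, (Y k ω : ℝ)|} := by
  rintro ω ⟨s, hs, s', hs', hclose⟩
  have hclose' : |((i : ℝ) + ∑ k ∈ range s, (X k ω : ℝ)) - (j + ∑ k ∈ range s', (Y k ω : ℝ))|
      ≤ r := by exact_mod_cast hclose
  exact (le_abs_or_le_abs_of_abs_sub_le hij hclose').imp
    (fun h ↦ ⟨s, hs, h⟩) (fun h ↦ ⟨s', hs', h⟩)

lemma cast_toNat_floor_mem_Ioc {T : ℝ} (hT : 1 ≤ T) : ((⌊T⌋.toNat : ℕ) : ℝ) ∈ Set.Ioc 0 T := by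
  rw [Int.floor_toNat]
  exact ⟨Nat.cast_pos.2 (Nat.floor_pos.2 hT), Nat.floor_le (by linarith)⟩

lemma exp_neg_sq_div_le_rpow {c₁ c₂ lam t : ℝ} (hc₁ : 0 < c₁) (hlam : 1 < lam) (ht : 0 < t)
    (htT : t ≤ c₁ * lam ^ 2 * log lam) :
    exp (-(c₂ * lam * log lam / 3) ^ 2 / (2 * t)) ≤ lam ^ (-(c₂ ^ 2 / (18 * c₁))) := by
  have hlog := log_pos hlam
  rw [rpow_def_of_pos (by linarith), exp_le_exp, neg_div]
  calc -((c₂ * lam * log lam / 3) ^ 2 / (2 * t))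
      ≤ -((c₂ * lam * log lam / 3) ^ 2 / (2 * (c₁ * lam ^ 2 * log lam))) := by
        gcongr
    _ = log lam * -(c₂ ^ 2 / (18 * c₁)) := by
        field_simp
        ring

lemma eventually_one_lt_and_le_mul_log (c₁ c₂ : ℝ) (hc₁ : 0 < c₁) (hc₂ : 0 < c₂) :
    ∀ᶠ lam in Filter.atTop,
      1 < lam ∧ 18 ≤ c₂ * lam * log lam ∧ 1 ≤ c₁ * lam ^ 2 * log lam := by
  filter_upwards [tendsto_log_atTop.eventually_ge_atTop 1, Filter.eventually_gt_atTop 1,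
    Filter.eventually_ge_atTop (18 / c₂), Filter.eventually_ge_atTop (1 / c₁)]
    with lam hlog hlam h18 h1
  rw [div_le_iff₀' hc₂] at h18
  rw [div_le_iff₀' hc₁] at h1
  refine ⟨hlam, h18.trans (le_mul_of_one_le_right (by linarith) hlog), ?_⟩
  calc 1 ≤ c₁ * lam := h1
    _ ≤ c₁ * lam * lam := le_mul_of_one_le_right (by linarith) hlam.le
    _ ≤ c₁ * lam * lam * log lam := le_mul_of_one_le_right (by nlinarith) hlog
    _ = c₁ * lam ^ 2 * log lam := by ring

/-- For two independent symmetric lazy walks on `ℤ` started at `i` and `j` with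
`|i − j| > c₂ λ log λ`, run for `t = ⌊c₁ λ² log λ⌋` steps, the probability that the
3-neighbourhoods of their ranges intersect is at most `C λ^{−α}` with
`α = c₂² / (18 c₁)`, for `λ` large enough. -/
theorem stmt_15 (c₁ c₂ : ℝ) (hc₁ : 0 < c₁) (hc₂ : 0 < c₂) :
    ∃ C > 0, ∃ lam₀ : ℝ, ∀ lam : ℝ, lam₀ ≤ lam →
      ∀ (Ω : Type) [MeasurableSpace Ω] (μ : Measure Ω) [IsProbabilityMeasure μ]
        (X Y : ℕ → Ω → ℤ),
        (∀ n, Measurable (X n)) → (∀ n, Measurable (Y n)) →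
        iIndepFun (Sum.elim X Y) μ →
        (∀ n, ∀ᵐ ω ∂μ, X n ω ∈ ({-1, 0, 1} : Set ℤ)) →
        (∀ n, ∀ᵐ ω ∂μ, Y n ω ∈ ({-1, 0, 1} : Set ℤ)) →
        (∀ n m, IdentDistrib (X n) (X m) μ μ) →
        (∀ n m, IdentDistrib (X n) (Y m) μ μ) →
        (∀ n, IdentDistrib (X n) (fun ω => -(X n ω)) μ μ) →
        ∀ i j : ℤ, c₂ * lam * Real.log lam < |(i : ℝ) - (j : ℝ)| →
          μ {ω | ∃ s ≤ (⌊c₁ * lam ^ 2 * Real.log lam⌋).toNat,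
              ∃ s' ≤ (⌊c₁ * lam ^ 2 * Real.log lam⌋).toNat,
              |(i + ∑ r ∈ Finset.range s, X r ω) -
                (j + ∑ r ∈ Finset.range s', Y r ω)| ≤ 6} ≤
            ENNReal.ofReal (C * lam ^ (-(c₂ ^ 2 / (18 * c₁)))) := by
  obtain ⟨lam₀, hlam₀⟩ := Filter.eventually_atTop.1 (eventually_one_lt_and_le_mul_log c₁ c₂ hc₁ hc₂)
  refine ⟨4, by norm_num, lam₀, fun lam hlam Ω _ μ _ X Y hXm hYm hind hXval hYval _ hXY hXsymm
    i j hij ↦ ?_⟩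
  obtain ⟨hlam, h18, hT⟩ := hlam₀ lam hlam
  obtain ⟨ht, htT⟩ := cast_toNat_floor_mem_Ioc hT
  have hX : IsLazySymmetricWalkIncrements X μ :=
    ⟨hXm, (hind.precomp Sum.inl_injective :), hXval, hXsymm⟩
  have hY : IsLazySymmetricWalkIncrements Y μ :=
    ⟨hYm, (hind.precomp Sum.inr_injective :), hYval, fun n ↦
      ((hXY 0 n).symm.trans (hXsymm 0)).trans ((hXY 0 n).comp measurable_neg)⟩
  have hgap : 2 * (c₂ * lam * log lam / 3) + (6 : ℤ) ≤ |(i : ℝ) - j| := by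
    push_cast
    linarith
  have hdecay := exp_neg_sq_div_le_rpow (c₂ := c₂) hc₁ hlam ht htT
  calc _ ≤ _ := measure_mono (setOf_exists_abs_sub_le_subset_union hgap _)
    _ ≤ _ := measure_union_le _ _
    _ ≤ _ := add_le_add (hX.measure_exists_abs_sum_ge_le (by positivity) _)
        (hY.measure_exists_abs_sum_ge_le (by positivity) _)
    _ ≤ ENNReal.ofReal (2 * lam ^ (-(c₂ ^ 2 / (18 * c₁)))) +
        ENNReal.ofReal (2 * lam ^ (-(c₂ ^ 2 / (18 * c₁)))) := by gcongr
    _ = _ := by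
      rw [← ENNReal.ofReal_add (by positivity) (by positivity)]
      ring_nf
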